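/- arXiv:1707.01010 — 2 statements merged into one kernel-verified Lean document; each statement's English description precedes it below -/
import Mathlib

section
/- If u and v are primitive words with u^m = u₁u₂ and v = u₁cu₂ for some letter c ∈ V and m ≥ 2, then for all n ≥ 2, the word u^m v^n is primitive but not ins-robust. -/
/-- `wpow v n` is the word `v` repeated `n` times. -/
def wpow {V : Type*} (v : List V) : ℕ → List V
  | 0 => []
  | n + 1 => v ++ wpow v n

/-- A word is primitive if it is nonempty and not a proper power. -/
def Primitive {V : Type*} (w : List V) : Prop :=
  w ≠ [] ∧ ∀ (v : List V) (n : ℕ), w = wpow v n → n = 1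

/-- A word is ins-robust if it is primitive and inserting any letter at any
position yields a primitive word. -/
def InsRobust {V : Type*} (w : List V) : Prop :=
  Primitive w ∧ ∀ (x y : List V) (a : V), w = x ++ y → Primitive (x ++ a :: y)

/-- `HasPeriod w p` : the word `w` is periodic with period `p`. -/
def HasPeriod {V : Type*} (w : List V) (p : ℕ) : Prop :=
  ∀ i, i + p < w.length → w[i]? = w[i + p]?

section Aux
variable {V : Type*}

theorem wpow_length (v : List V) (n : ℕ) : (wpow v n).length = n * v.length := by
  induction n with
  | zero => simp [wpow]
  | succ n ih =>
    show (v ++ wpow v n).length = _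
    simp [ih, Nat.succ_mul, Nat.add_comm]

theorem wpow_getElem? (v : List V) (n i : ℕ) (h : i < n * v.length) :
    (wpow v n)[i]? = v[i % v.length]? := by
  induction n generalizing i with
  | zero => omega
  | succ n ih =>
    show (v ++ wpow v n)[i]? = _
    rw [Nat.succ_mul] at h
    by_cases hib : i < v.length
    · rw [List.getElem?_append_left hib, Nat.mod_eq_of_lt hib]
    · push_neg at hib
      rw [List.getElem?_append_right hib, ih (i - v.length) (by omega),
        ← Nat.mod_eq_sub_mod hib]

theorem shift_iterate (v : List V) (s : ℕ)
    (hinv : ∀ i < v.length, v[i]? = v[(i + s) % v.length]?) :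
    ∀ t, ∀ i < v.length, v[i]? = v[(i + t * s) % v.length]? := by
  intro t
  induction t with
  | zero => intro i hi; simp [Nat.mod_eq_of_lt hi]
  | succ t ih =>
    intro i hi
    have hb : 0 < v.length := by omega
    have h1 := ih i hi
    have h2 := hinv ((i + t * s) % v.length) (Nat.mod_lt _ hb)
    rw [Nat.mod_add_mod] at h2
    rw [h1, h2]
    congr 1
    rw [Nat.succ_mul, ← Nat.add_assoc]

theorem shift_gcd (v : List V) (s : ℕ) (hb : 0 < v.length)
    (hinv : ∀ i < v.length, v[i]? = v[(i + s) % v.length]?) :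
    ∀ i < v.length, v[i]? = v[(i + Nat.gcd s v.length) % v.length]? := by
  obtain ⟨t, ht⟩ : ∃ t : ℕ, (t * s) % v.length = Nat.gcd s v.length % v.length := by
    have hbez := Nat.gcd_eq_gcd_ab s v.length
    refine ⟨(Nat.gcdA s v.length % (v.length : ℤ)).toNat, ?_⟩
    have hbz : (0 : ℤ) < (v.length : ℤ) := by exact_mod_cast hb
    have hnn : 0 ≤ Nat.gcdA s v.length % (v.length : ℤ) := Int.emod_nonneg _ (by omega)
    have hcast : (((Nat.gcdA s v.length % (v.length : ℤ)).toNat : ℤ)) =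
        Nat.gcdA s v.length % (v.length : ℤ) := Int.toNat_of_nonneg hnn
    have key : (((Nat.gcdA s v.length % (v.length : ℤ)).toNat * s : ℕ) : ℤ) % (v.length : ℤ)
        = ((Nat.gcd s v.length : ℕ) : ℤ) % (v.length : ℤ) := by
      push_cast
      rw [hcast, Int.mul_emod, Int.emod_emod_of_dvd _ dvd_rfl, ← Int.mul_emod, hbez,
        Int.mul_comm (s : ℤ) _, Int.add_mul_emod_self_left, Int.mul_comm]
    exact_mod_cast key
  intro i hi
  rw [shift_iterate v s hinv t i hi]
  congr 1
  rw [Nat.add_mod, ht, ← Nat.add_mod]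

theorem mod_of_shift (v : List V) (g : ℕ) (hg : 0 < g)
    (hinv : ∀ i < v.length, v[i]? = v[(i + g) % v.length]?) :
    ∀ i, i < v.length → v[i]? = v[i % g]? := by
  intro i
  induction i using Nat.strong_induction_on with
  | _ i ih =>
    intro hi
    by_cases hig : i < g
    · rw [Nat.mod_eq_of_lt hig]
    · push_neg at hig
      have h1 := hinv (i - g) (by omega)
      rw [Nat.sub_add_cancel hig, Nat.mod_eq_of_lt hi] at h1
      rw [← h1, ih (i - g) (by omega) (by omega), ← Nat.mod_eq_sub_mod hig]

theorem eq_wpow_of_mod (v : List V) (g : ℕ) (hb : 0 < v.length) (hg : 0 < g)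
    (hdvd : g ∣ v.length)
    (hmod : ∀ i, i < v.length → v[i]? = v[i % g]?) :
    v = wpow (v.take g) (v.length / g) := by
  have hgb : g ≤ v.length := Nat.le_of_dvd hb hdvd
  have htl : (v.take g).length = g := by
    simp [List.length_take, Nat.min_eq_left hgb]
  have hlen : (wpow (v.take g) (v.length / g)).length = v.length := by
    rw [wpow_length, htl, Nat.div_mul_cancel hdvd]
  refine (List.ext_getElem? ?_).symm
  intro i
  by_cases hi : i < v.length
  · rw [wpow_getElem? _ _ i (by rw [htl, Nat.div_mul_cancel hdvd]; exact hi), htl,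
      List.getElem?_take_of_lt (Nat.mod_lt _ hg), (hmod i hi).symm]
  · rw [List.getElem?_eq_none (by omega), List.getElem?_eq_none (by omega : v.length ≤ i)]

theorem not_primitive_of_shift (v : List V) (s : ℕ) (hb : 0 < v.length)
    (hs : ¬ v.length ∣ s)
    (hinv : ∀ i < v.length, v[i]? = v[(i + s) % v.length]?) :
    ¬ Primitive v := by
  intro hp
  have hg : 0 < Nat.gcd s v.length := Nat.gcd_pos_of_pos_right _ hb
  have hdvd : Nat.gcd s v.length ∣ v.length := Nat.gcd_dvd_right _ _
  have hglt : Nat.gcd s v.length < v.length := by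
    rcases Nat.lt_or_ge (Nat.gcd s v.length) v.length with h | h
    · exact h
    · exfalso
      have heq : Nat.gcd s v.length = v.length :=
        le_antisymm (Nat.le_of_dvd hb hdvd) h
      exact hs (heq ▸ Nat.gcd_dvd_left s v.length)
  have hmod := mod_of_shift v _ hg (shift_gcd v s hb hinv)
  have heq := eq_wpow_of_mod v _ hb hg hdvd hmod
  have h1 := hp.2 _ _ heq
  have h2 := Nat.div_mul_cancel hdvd
  rw [h1] at h2
  omega

end Aux

theorem stmt3 {V : Type*} (u v u₁ u₂ : List V) (c : V) (m : ℕ)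
    (hu : Primitive u) (hv : Primitive v) (hm : 2 ≤ m)
    (h1 : wpow u m = u₁ ++ u₂) (h2 : v = u₁ ++ c :: u₂) :
    ∀ n, 2 ≤ n →
      Primitive (wpow u m ++ wpow v n) ∧ ¬ InsRobust (wpow u m ++ wpow v n) := by
  intro n hn
  have ha : 0 < u.length := List.length_pos_iff.mpr hu.1
  have hblen : v.length = m * u.length + 1 := by
    have h1l := congrArg List.length h1
    have h2l := congrArg List.length h2
    rw [wpow_length] at h1l
    simp only [List.length_append, List.length_cons] at h1l h2l
    omega
  have hP2 : 2 ≤ m * u.length := by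
    calc 2 = 2 * 1 := rfl
    _ ≤ m * u.length := Nat.mul_le_mul hm ha
  have hb3 : 3 ≤ v.length := by omega
  have hb0 : 0 < v.length := by omega
  have hwplen : (wpow u m).length = m * u.length := wpow_length u m
  have hwne : wpow u m ++ wpow v n ≠ [] := by
    intro h
    have hl0 : (wpow u m ++ wpow v n).length = 0 := by rw [h]; rfl
    rw [List.length_append, wpow_length, wpow_length] at hl0
    omega
  constructor
  · -- Primitive
    refine ⟨hwne, ?_⟩
    intro z k hzk
    have hQ2b : 2 * v.length ≤ n * v.length := Nat.mul_le_mul_right _ hn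
    have hbQ : v.length ∣ n * v.length := dvd_mul_left v.length n
    have hlen : k * z.length = m * u.length + n * v.length := by
      have := congrArg List.length hzk
      rw [List.length_append, hwplen, wpow_length, wpow_length] at this
      omega
    have hwu : ∀ i < m * u.length, (wpow u m ++ wpow v n)[i]? = u[i % u.length]? := by
      intro i hi
      rw [List.getElem?_append_left (by omega : i < (wpow u m).length)]
      exact wpow_getElem? u m i (by omega)
    have hwv : ∀ j < n * v.length,
        (wpow u m ++ wpow v n)[m * u.length + j]? = v[j % v.length]? := by
      intro j hj
      rw [List.getElem?_append_right (by omega : (wpow u m).length ≤ m * u.length + j),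
        hwplen, (by omega : m * u.length + j - (m * u.length) = j)]
      exact wpow_getElem? v n j hj
    have hper : ∀ t, t + z.length < k * z.length →
        (wpow u m ++ wpow v n)[t]? = (wpow u m ++ wpow v n)[t + z.length]? := by
      intro t ht
      rw [hzk, wpow_getElem? z k t (by omega), wpow_getElem? z k (t + z.length) (by omega),
        Nat.add_mod_right]
    rcases k with _ | k
    · exact absurd (by simpa [wpow] using hzk) hwne
    rcases k with _ | k
    · rfl
    exfalso
    have hbnd : ¬ v.length ∣ z.length := by
      intro hdvd
      have h1' : v.length ∣ (k + 1 + 1) * z.length := Dvd.dvd.mul_left hdvd _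
      rw [hlen] at h1'
      have h2' : v.length ∣ m * u.length := (Nat.dvd_add_iff_left hbQ).mpr h1'
      have := Nat.le_of_dvd (by omega) h2'
      omega
    by_cases hA : z.length + v.length ≤ n * v.length
    · -- Case A : shift invariance of v
      have hinv : ∀ i < v.length,
          v[i]? = v[(i + (n * v.length - z.length - v.length)) % v.length]? := by
        intro i hi
        set o := n * v.length - z.length - v.length with hodef
        obtain ⟨q, hq⟩ := hbQ
        have hq1 : ∃ q', q = q' + 1 := by
          rcases q with _ | q'
          · exfalso; rw [Nat.mul_zero] at hq; omega
          · exact ⟨q', rfl⟩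
        obtain ⟨q', rfl⟩ := hq1
        have hQb : n * v.length - v.length = v.length * q' := by
          rw [hq, Nat.mul_succ, Nat.add_sub_cancel]
        have e1 : (wpow u m ++ wpow v n)[m * u.length + (o + i)]? = v[(o + i) % v.length]? :=
          hwv (o + i) (by omega)
        have e2 : (wpow u m ++ wpow v n)[m * u.length + (o + i)]?
            = (wpow u m ++ wpow v n)[m * u.length + (o + i) + z.length]? :=
          hper (m * u.length + (o + i)) (by omega)
        have e3 : m * u.length + (o + i) + z.length
            = m * u.length + (n * v.length - v.length + i) := by omega
        have e4 : (wpow u m ++ wpow v n)[m * u.length + (n * v.length - v.length + i)]?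
            = v[(n * v.length - v.length + i) % v.length]? :=
          hwv (n * v.length - v.length + i) (by omega)
        have e5 : (n * v.length - v.length + i) % v.length = i % v.length := by
          rw [hQb, Nat.mul_add_mod]
        calc v[i]? = v[i % v.length]? := by rw [Nat.mod_eq_of_lt hi]
          _ = v[(n * v.length - v.length + i) % v.length]? := by rw [e5]
          _ = (wpow u m ++ wpow v n)[m * u.length + (n * v.length - v.length + i)]? := e4.symm
          _ = (wpow u m ++ wpow v n)[m * u.length + (o + i)]? := by rw [← e3, ← e2]
          _ = v[(o + i) % v.length]? := e1
          _ = v[(i + o) % v.length]? := by rw [Nat.add_comm o i]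
      have hbo : ¬ v.length ∣ (n * v.length - z.length - v.length) := by
        intro hdvd
        apply hbnd
        have hd1 : v.length ∣ n * v.length - (n * v.length - z.length - v.length) :=
          Nat.dvd_sub hbQ hdvd
        have hd2 : n * v.length - (n * v.length - z.length - v.length)
            = z.length + v.length := by omega
        rw [hd2] at hd1
        have hd3 := Nat.dvd_sub hd1 (dvd_refl v.length)
        rwa [Nat.add_sub_cancel] at hd3
      exact not_primitive_of_shift v _ hb0 hbo hinv hv
    · -- Case B
      push_neg at hA
      have h2K : 2 * z.length ≤ (k + 1 + 1) * z.length :=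
        Nat.mul_le_mul_right _ (by omega)
      have hn2 : n = 2 := by
        by_contra hne
        have h3Q : 3 * v.length ≤ n * v.length :=
          Nat.mul_le_mul_right _ (by omega)
        omega
      subst hn2
      have hk0 : k = 0 := by
        by_contra hkne
        have h3K : 3 * z.length ≤ (k + 1 + 1) * z.length :=
          Nat.mul_le_mul_right _ (by omega)
        omega
      subst hk0
      obtain ⟨e, hPe⟩ : ∃ e, m * u.length = 2 * e := ⟨m * u.length / 2, by omega⟩
      have he1 : 1 ≤ e := by omega
      have hbe : v.length = 2 * e + 1 := by omega
      have hde : z.length = 3 * e + 1 := by omega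
      -- occurrence of v at position e in w
      have hocc : ∀ i < v.length, v[i]? = (wpow u m ++ wpow v 2)[e + i]? := by
        intro i hi
        have s1 : (wpow u m ++ wpow v 2)[e + i]?
            = (wpow u m ++ wpow v 2)[e + i + z.length]? := hper (e + i) (by omega)
        have s2 : e + i + z.length = m * u.length + (v.length + i) := by omega
        have s3 : (wpow u m ++ wpow v 2)[m * u.length + (v.length + i)]?
            = v[(v.length + i) % v.length]? := hwv (v.length + i) (by omega)
        have s4 : (v.length + i) % v.length = i := by
          rw [Nat.add_mod_left]; exact Nat.mod_eq_of_lt hi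
        rw [s1, s2, s3, s4]
      have hR2 : ∀ i < e, v[i]? = u[(e + i) % u.length]? := by
        intro i hi
        rw [hocc i (by omega)]
        exact hwu (e + i) (by omega)
      have hR1 : ∀ i, e ≤ i → i < v.length → v[i]? = v[i - e]? := by
        intro i hie hi
        rw [hocc i hi, (by omega : e + i = m * u.length + (i - e)),
          hwv (i - e) (by omega), Nat.mod_eq_of_lt (by omega)]
      have hR3 : ∀ i < e, v[e + 1 + i]? = u[i % u.length]? := by
        intro i hi
        have t1 : (wpow u m ++ wpow v 2)[i]?
            = (wpow u m ++ wpow v 2)[i + z.length]? := hper i (by omega)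
        have t2 : (wpow u m ++ wpow v 2)[i]? = u[i % u.length]? := hwu i (by omega)
        have t3 : i + z.length = m * u.length + (e + 1 + i) := by omega
        have t4 : (wpow u m ++ wpow v 2)[m * u.length + (e + 1 + i)]?
            = v[(e + 1 + i) % v.length]? := hwv (e + 1 + i) (by omega)
        rw [Nat.mod_eq_of_lt (by omega)] at t4
        rw [← t4, ← t3, ← t1, t2]
      have hR4 : ∀ i, i + 1 < e → u[i % u.length]? = u[(i + (e + 1)) % u.length]? := by
        intro i hi
        calc u[i % u.length]? = v[e + 1 + i]? := (hR3 i (by omega)).symm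
          _ = v[e + 1 + i - e]? := hR1 (e + 1 + i) (by omega) (by omega)
          _ = v[i + 1]? := by rw [(by omega : e + 1 + i - e = i + 1)]
          _ = u[(e + (i + 1)) % u.length]? := hR2 (i + 1) (by omega)
          _ = u[(i + (e + 1)) % u.length]? := by rw [(by omega : e + (i + 1) = i + (e + 1))]
      have hR5 : u[(e - 1) % u.length]? = u[e % u.length]? := by
        calc u[(e - 1) % u.length]? = v[e + 1 + (e - 1)]? := (hR3 (e - 1) (by omega)).symm
          _ = v[2 * e]? := by rw [(by omega : e + 1 + (e - 1) = 2 * e)]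
          _ = v[e]? := by
              rw [hR1 (2 * e) (by omega) (by omega), (by omega : 2 * e - e = e)]
          _ = v[0]? := by rw [hR1 e (by omega) (by omega), (by omega : e - e = 0)]
          _ = u[(e + 0) % u.length]? := hR2 0 (by omega)
          _ = u[e % u.length]? := by rw [Nat.add_zero]
      by_cases ha1 : u.length = 1
      · -- v is constant, contradiction with primitivity of v
        have hvc : ∀ i, i < v.length → v[i]? = u[0]? := by
          intro i
          induction i using Nat.strong_induction_on with
          | _ i ih =>
            intro hi
            by_cases hie : i < e
            · rw [hR2 i hie, ha1, Nat.mod_one]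
            · rw [hR1 i (by omega) hi]
              exact ih (i - e) (by omega) (by omega)
        have hinv : ∀ i < v.length, v[i]? = v[(i + 1) % v.length]? := by
          intro i hi
          rw [hvc i hi, hvc ((i + 1) % v.length) (Nat.mod_lt _ hb0)]
        exact not_primitive_of_shift v 1 hb0
          (fun h => by have := Nat.le_of_dvd one_pos h; omega) hinv hv
      · have ha2 : 2 ≤ u.length := by omega
        have hale : 2 * u.length ≤ m * u.length :=
          Nat.mul_le_mul_right _ hm
        by_cases hae : u.length = e
        · -- u is constant, contradiction with primitivity of u
          have huc : ∀ i, i < u.length → u[i]? = u[0]? := by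
            intro i
            induction i using Nat.strong_induction_on with
            | _ i ih =>
              intro hi
              rcases Nat.eq_zero_or_pos i with rfl | hi0
              · rfl
              have h4 := hR4 (i - 1) (by omega)
              rw [Nat.mod_eq_of_lt (by omega : i - 1 < u.length),
                (by omega : (i - 1) + (e + 1) = i + e), hae,
                (by omega : i + e = e + i), Nat.add_mod_left,
                Nat.mod_eq_of_lt (by omega : i < e)] at h4
              rw [← h4]
              exact ih (i - 1) (by omega) (by omega)
          have hinv : ∀ i < u.length, u[i]? = u[(i + 1) % u.length]? := by
            intro i hi
            rw [huc i hi, huc ((i + 1) % u.length) (Nat.mod_lt _ (by omega))]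
          exact not_primitive_of_shift u 1 (by omega)
            (fun h => by have := Nat.le_of_dvd one_pos h; omega) hinv hu
        · have haltE : u.length < e := by omega
          by_cases hdvd : u.length ∣ (e + 1)
          · -- u.length divides 2, hence equals 2
            have hd2e : u.length ∣ 2 * e := ⟨m, by rw [← hPe, Nat.mul_comm]⟩
            have hd2 : u.length ∣ 2 := by
              have hsub := Nat.dvd_sub (hdvd.mul_left 2) hd2e
              rwa [(by ring_nf : 2 * (e + 1) = 2 * e + 2), Nat.add_sub_cancel_left] at hsub
            have hae2 : u.length = 2 := by
              have := Nat.le_of_dvd (by omega) hd2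
              omega
            obtain ⟨t, ht⟩ := hdvd
            have heodd : e % 2 = 1 := by rw [hae2] at ht; omega
            rw [hae2, (by omega : (e - 1) % 2 = 0), (by omega : e % 2 = 1)] at hR5
            have hinv : ∀ i < u.length, u[i]? = u[(i + 1) % u.length]? := by
              intro i hi
              rw [hae2] at hi ⊢
              interval_cases i
              · simpa using hR5
              · simpa using hR5.symm
            exact not_primitive_of_shift u 1 (by omega)
              (fun h => by have := Nat.le_of_dvd one_pos h; omega) hinv hu
          · -- shift invariance of u by e + 1
            have hinv : ∀ i < u.length, u[i]? = u[(i + (e + 1)) % u.length]? := by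
              intro i hi
              have h4 := hR4 i (by omega)
              rwa [Nat.mod_eq_of_lt hi] at h4
            exact not_primitive_of_shift u (e + 1) (by omega) hdvd hinv hu
  · -- not InsRobust
    rintro ⟨-, hins⟩
    have hw : wpow u m ++ wpow v n = u₁ ++ (u₂ ++ wpow v n) := by
      rw [h1, List.append_assoc]
    have hprim := hins u₁ (u₂ ++ wpow v n) c hw
    have heq : u₁ ++ c :: (u₂ ++ wpow v n) = wpow v (n + 1) := by
      show _ = v ++ wpow v n
      rw [h2]
      simp
    rw [heq] at hprim
    have := hprim.2 v (n + 1) rfl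
    omega
end

section
/- The set Q \ Q_I of primitive words that are not ins-robust is reflective: if xy is primitive but not ins-robust, then yx is primitive but not ins-robust. -/
lemma wpow_nil {V : Type*} : ∀ n, wpow ([] : List V) n = []
  | 0 => rfl
  | n + 1 => by rw [show wpow ([] : List V) (n+1) = [] ++ wpow ([] : List V) n from rfl,
      wpow_nil n]; rfl

lemma wpow_succ' {V : Type*} (v : List V) (n : ℕ) : wpow v (n + 1) = wpow v n ++ v := by
  induction n with
  | zero => simp [wpow]
  | succ n ih =>
    rw [show wpow v (n+1+1) = v ++ wpow v (n+1) from rfl]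
    conv_lhs => rw [ih]
    rw [show wpow v (n+1) = v ++ wpow v n from rfl, List.append_assoc]

lemma wpow_rot {V : Type*} (d t : List V) : ∀ n, d ++ wpow (t ++ d) n ++ t = wpow (d ++ t) (n + 1)
  | 0 => by simp [wpow]
  | n + 1 => by
    rw [show wpow (t ++ d) (n+1) = (t ++ d) ++ wpow (t ++ d) n from rfl,
        show wpow (d ++ t) (n+1+1) = (d ++ t) ++ wpow (d ++ t) (n+1) from rfl,
        ← wpow_rot d t n]
    simp [List.append_assoc]

lemma prim_rot {V : Type*} {a : V} {s : List V} (h : Primitive (a :: s)) :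
    Primitive (s ++ [a]) := by
  refine ⟨by simp, ?_⟩
  intro v n hv
  rcases n with _ | m
  · simp [wpow] at hv
  rw [wpow_succ'] at hv
  rcases List.eq_nil_or_concat v with rfl | ⟨u, b, rfl⟩
  · rw [wpow_nil] at hv; simp at hv
  · rw [List.concat_eq_append, ← List.append_assoc] at hv
    obtain ⟨hs, hab⟩ := List.append_inj' hv (by simp)
    obtain rfl : a = b := by simpa using hab
    have key : a :: s = wpow ([a] ++ u) (m + 1) := by
      rw [← wpow_rot [a] u m, hs]
      simp
    exact h.2 _ _ key

lemma prim_reflect {V : Type*} : ∀ (x y : List V), Primitive (x ++ y) → Primitive (y ++ x)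
  | [], y, h => by simpa using h
  | a :: x, y, h => by
    have h1 : Primitive (x ++ (y ++ [a])) := by
      have := prim_rot (show Primitive (a :: (x ++ y)) from h)
      simpa [List.append_assoc] using this
    have := prim_reflect x (y ++ [a]) h1
    simpa [List.append_assoc] using this

theorem stmt6 {V : Type*} (x y : List V)
    (h : Primitive (x ++ y) ∧ ¬ InsRobust (x ++ y)) :
    Primitive (y ++ x) ∧ ¬ InsRobust (y ++ x) := by
  obtain ⟨hp, hni⟩ := h
  refine ⟨prim_reflect x y hp, ?_⟩
  -- extract a failing insertion for x ++ y
  have hex : ∃ (u v : List V) (a : V), x ++ y = u ++ v ∧ ¬ Primitive (u ++ a :: v) := by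
    by_contra hc
    push_neg at hc
    exact hni ⟨hp, fun u v a huv => hc u v a huv⟩
  obtain ⟨u, v, a, huv, hnp⟩ := hex
  rcases List.append_eq_append_iff.mp huv with ⟨t, hu, hy⟩ | ⟨s, hx, hv⟩
  · -- u = x ++ t, y = t ++ v
    subst hu hy
    rintro ⟨-, hins⟩
    have h1 : Primitive (t ++ a :: (v ++ x)) := by
      have := hins t (v ++ x) a (by simp)
      simpa using this
    apply hnp
    have := prim_reflect (t ++ a :: (v ++ x)) [] (by simpa using h1)
    have h2 : Primitive ((t ++ [a] ++ v) ++ x) := by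
      simpa [List.append_assoc] using h1
    have := prim_reflect (t ++ [a] ++ v) x h2
    simpa [List.append_assoc] using this
  · -- x = u ++ s, v = s ++ y
    subst hx hv
    rintro ⟨-, hins⟩
    have h1 : Primitive ((y ++ u) ++ a :: s) := by
      exact hins (y ++ u) s a (by simp)
    apply hnp
    have h2 : Primitive (y ++ (u ++ [a] ++ s)) := by
      simpa [List.append_assoc] using h1
    have := prim_reflect y (u ++ [a] ++ s) h2
    simpa [List.append_assoc] using this
end
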